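/- arXiv:math-ph/0602004 — 3 statements merged into one kernel-verified Lean document; each statement's English description precedes it below -/
import Mathlib

section
/- Let A be a complete filtered associative algebra over a field of characteristic zero, with decreasing filtration {A_n} satisfying A_m A_n ⊆ A_{m+n}, and let P: A → A be a linear filtration-preserving map with P̃ = id − P. For each a ∈ A_1, the map F_a(b) = a − BCH(P(b), P̃(b)) is a contraction on A_1 with respect to the ultrametric induced by the filtration: for b ∈ A_1 and ε ∈ A_n, F_a(b+ε) − F_a(b) ∈ A_{n+1}. -/
open scoped BigOperators

noncomputable def expS (K : Type*) {A : Type*} [Field K] [CharZero K] [Ring A] [Algebra K A]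
    [UniformSpace A] (a : A) : A :=
  ∑' n : ℕ, ((n.factorial : K)⁻¹) • a ^ n

noncomputable def logS (K : Type*) {A : Type*} [Field K] [CharZero K] [Ring A] [Algebra K A]
    [UniformSpace A] (a : A) : A :=
  ∑' n : ℕ, (((-1 : K) ^ n) * ((n : K) + 1)⁻¹) • (a - 1) ^ (n + 1)

noncomputable def BCHs (K : Type*) {A : Type*} [Field K] [CharZero K] [Ring A] [Algebra K A]
    [UniformSpace A] (x y : A) : A :=
  logS K (expS K x * expS K y) - x - y

/-- A complete decreasing multiplicative filtration defining the topology of `A`. -/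
def IsCompleteFiltration (K : Type*) {A : Type*} [Field K] [CharZero K] [Ring A] [Algebra K A]
    [UniformSpace A] (F : ℕ → Submodule K A) : Prop :=
  F 0 = ⊤ ∧ (∀ n, F (n + 1) ≤ F n) ∧
    (∀ m n : ℕ, ∀ x ∈ F m, ∀ y ∈ F n, x * y ∈ F (m + n)) ∧
    (∀ n, IsOpen ((F n : Set A))) ∧
    (∀ U ∈ nhds (0 : A), ∃ n, ((F n : Set A)) ⊆ U)

variable {K : Type*} [Field K] [CharZero K] {A : Type*} [Ring A] [Algebra K A]
  [UniformSpace A] [CompleteSpace A] [T2Space A] [IsTopologicalRing A]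
  [IsUniformAddGroup A]

/-!
Modulo `F (n + 1)` and for increments in `F n`, a power series without constant term is linear
on `F 1`, because `x ^ (k + 1) - x' ^ (k + 1) ∈ F (n + k)`; so is the product on `1 + F 1`. Hence `exp` and `log` only contribute their linear terms, the increment of
`log (exp x * exp y)` is that of `x + y`, and the increment of the BCH series vanishes.
-/

section

-- A fresh `A`, so that the lemmas below carry only the instances they use.
variable {A : Type*} [Ring A] [Algebra K A] [UniformSpace A] {F : ℕ → Submodule K A}

namespace IsCompleteFiltration

theorem antitone (hF : IsCompleteFiltration K F) : Antitone F :=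
  antitone_nat_of_succ_le hF.2.1

theorem mul_mem (hF : IsCompleteFiltration K F) {m n : ℕ} {x y : A} (hx : x ∈ F m)
    (hy : y ∈ F n) : x * y ∈ F (m + n) :=
  hF.2.2.1 m n x hx y hy

theorem isClosed [SeparatelyContinuousAdd A] (hF : IsCompleteFiltration K F) (n : ℕ) :
    IsClosed (F n : Set A) :=
  (F n).toAddSubgroup.isClosed_of_isOpen (hF.2.2.2.1 n)

theorem summable_of_mem [CompleteSpace A] [IsUniformAddGroup A]
    (hF : IsCompleteFiltration K F) {f : ℕ → A} (hf : ∀ k, f k ∈ F k) : Summable f := by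
  refine summable_iff_vanishing.2 fun U hU => ?_
  obtain ⟨m, hm⟩ := hF.2.2.2.2 U hU
  refine ⟨Finset.range m, fun t ht => hm <| Submodule.sum_mem _ fun k hk => ?_⟩
  have hmk : m ≤ k := not_lt.1 fun hkm => Finset.disjoint_left.1 ht hk (Finset.mem_range.2 hkm)
  exact hF.antitone hmk (hf k)

theorem tsum_mem [SeparatelyContinuousAdd A] (hF : IsCompleteFiltration K F) {f : ℕ → A}
    (hs : Summable f) {m : ℕ} (hf : ∀ k, f k ∈ F m) : ∑' k, f k ∈ F m :=
  (hF.isClosed m).mem_of_tendsto hs.hasSum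
    (Filter.Eventually.of_forall fun _ => Submodule.sum_mem _ fun k _ => hf k)

theorem pow_succ_mem (hF : IsCompleteFiltration K F) {x : A} (hx : x ∈ F 1) :
    ∀ k, x ^ (k + 1) ∈ F (k + 1)
  | 0 => by simpa using hx
  | k + 1 => by
    rw [pow_succ]
    exact hF.mul_mem (hF.pow_succ_mem hx k) hx

theorem pow_succ_sub_pow_succ_mem (hF : IsCompleteFiltration K F) {x x' : A} (hx : x ∈ F 1)
    (hx' : x' ∈ F 1) {n : ℕ} (hd : x - x' ∈ F n) :
    ∀ k, x ^ (k + 1) - x' ^ (k + 1) ∈ F (n + k)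
  | 0 => by simpa using hd
  | k + 1 => by
    have hsplit : x ^ (k + 2) - x' ^ (k + 2) =
        (x ^ (k + 1) - x' ^ (k + 1)) * x + x' ^ (k + 1) * (x - x') := by
      simp only [pow_succ]
      noncomm_ring
    rw [hsplit, ← Nat.add_assoc]
    refine add_mem (hF.mul_mem (hF.pow_succ_sub_pow_succ_mem hx hx' hd k) hx) ?_
    rw [show n + k + 1 = k + 1 + n by omega]
    exact hF.mul_mem (hF.pow_succ_mem hx' k) hd

theorem mem_of_smodEq (hF : IsCompleteFiltration K F) {n : ℕ} {x y : A}
    (h : x ≡ y [SMOD F (n + 1)]) (hy : y ∈ F n) : x ∈ F n := by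
  simpa using add_mem (hF.antitone n.le_succ (SModEq.sub_mem.1 h)) hy

theorem mul_sub_one_mem (hF : IsCompleteFiltration K F) {e f : A} (he : e - 1 ∈ F 1)
    (hf : f - 1 ∈ F 1) : e * f - 1 ∈ F 1 := by
  have hsplit : e * f - 1 = (e - 1) + (f - 1) + (e - 1) * (f - 1) := by noncomm_ring
  rw [hsplit]
  exact add_mem (add_mem he hf) (hF.antitone (by omega) (hF.mul_mem he hf))

theorem mul_sub_mul_smodEq (hF : IsCompleteFiltration K F) {e e' f f' : A}
    (he' : e' - 1 ∈ F 1) (hf : f - 1 ∈ F 1) {n : ℕ} (hde : e - e' ∈ F n)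
    (hdf : f - f' ∈ F n) :
    e * f - e' * f' ≡ (e - e') + (f - f') [SMOD F (n + 1)] := by
  have hsplit : e * f - e' * f' - ((e - e') + (f - f')) =
      (e - e') * (f - 1) + (e' - 1) * (f - f') := by noncomm_ring
  refine SModEq.sub_mem.2 (hsplit ▸ add_mem (hF.mul_mem hde hf) ?_)
  rw [Nat.add_comm n]
  exact hF.mul_mem he' hdf

variable [CompleteSpace A] [IsUniformAddGroup A]

theorem summable_smul_pow_succ (hF : IsCompleteFiltration K F) (c : ℕ → K) {x : A}
    (hx : x ∈ F 1) : Summable fun k => c k • x ^ (k + 1) :=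
  hF.summable_of_mem fun k =>
    Submodule.smul_mem _ _ (hF.antitone k.le_succ (hF.pow_succ_mem hx k))

theorem tsum_smul_pow_succ_sub_smodEq [T2Space A] (hF : IsCompleteFiltration K F) (c : ℕ → K)
    {x x' : A} (hx : x ∈ F 1) (hx' : x' ∈ F 1) {n : ℕ} (hd : x - x' ∈ F n) :
    ∑' k, c k • x ^ (k + 1) - ∑' k, c k • x' ^ (k + 1) ≡
      c 0 • (x - x') [SMOD F (n + 1)] := by
  set f : ℕ → A := fun k => c k • (x ^ (k + 1) - x' ^ (k + 1))
  have hf : ∀ k, f k ∈ F (n + k) := fun k =>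
    Submodule.smul_mem _ _ (hF.pow_succ_sub_pow_succ_mem hx hx' hd k)
  have hsf : Summable f :=
    hF.summable_of_mem fun k => hF.antitone (Nat.le_add_left k n) (hf k)
  have htail : ∑' k, f (k + 1) ∈ F (n + 1) :=
    hF.tsum_mem ((summable_nat_add_iff 1).2 hsf) fun k => hF.antitone (by omega) (hf (k + 1))
  have hdiff : ∑' k, c k • x ^ (k + 1) - ∑' k, c k • x' ^ (k + 1) = ∑' k, f k := by
    rw [← (hF.summable_smul_pow_succ c hx).tsum_sub (hF.summable_smul_pow_succ c hx')]
    simp only [f, smul_sub]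
  rw [hdiff, hsf.tsum_eq_zero_add, SModEq.sub_mem]
  simpa [f] using htail

end IsCompleteFiltration

variable [CompleteSpace A] [IsUniformAddGroup A] [T2Space A]

theorem expS_eq_one_add_tsum (hF : IsCompleteFiltration K F) {x : A} (hx : x ∈ F 1) :
    expS K x = 1 + ∑' k, (((k + 1).factorial : K)⁻¹) • x ^ (k + 1) := by
  have hs : Summable fun k : ℕ => ((k.factorial : K)⁻¹) • x ^ k :=
    (summable_nat_add_iff 1).1 (hF.summable_smul_pow_succ _ hx)
  rw [expS, hs.tsum_eq_zero_add]
  simp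

theorem expS_sub_one_mem (hF : IsCompleteFiltration K F) {x : A}
    (hx : x ∈ F 1) : expS K x - 1 ∈ F 1 := by
  rw [expS_eq_one_add_tsum hF hx, add_sub_cancel_left]
  exact hF.tsum_mem (hF.summable_smul_pow_succ _ hx) fun k =>
    Submodule.smul_mem _ _ (hF.antitone (by omega) (hF.pow_succ_mem hx k))

theorem expS_sub_expS_smodEq (hF : IsCompleteFiltration K F) {x x' : A} (hx : x ∈ F 1)
    (hx' : x' ∈ F 1) {n : ℕ} (hd : x - x' ∈ F n) :
    expS K x - expS K x' ≡ x - x' [SMOD F (n + 1)] := by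
  rw [expS_eq_one_add_tsum hF hx, expS_eq_one_add_tsum hF hx', add_sub_add_left_eq_sub]
  simpa using hF.tsum_smul_pow_succ_sub_smodEq (fun k => (((k + 1).factorial : K)⁻¹)) hx hx' hd

theorem logS_sub_logS_smodEq (hF : IsCompleteFiltration K F) {u u' : A} (hu : u - 1 ∈ F 1)
    (hu' : u' - 1 ∈ F 1) {n : ℕ} (hd : u - u' ∈ F n) :
    logS K u - logS K u' ≡ u - u' [SMOD F (n + 1)] := by
  rw [← sub_sub_sub_cancel_right u u' 1] at hd ⊢
  simpa [logS] using
    hF.tsum_smul_pow_succ_sub_smodEq (fun k => (-1 : K) ^ k * ((k : K) + 1)⁻¹) hu hu' hd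

theorem BCHs_smodEq (hF : IsCompleteFiltration K F) {x y x' y' : A} (hx : x ∈ F 1)
    (hy : y ∈ F 1) (hx' : x' ∈ F 1) (hy' : y' ∈ F 1) {n : ℕ} (hdx : x - x' ∈ F n)
    (hdy : y - y' ∈ F n) : BCHs K x y ≡ BCHs K x' y' [SMOD F (n + 1)] := by
  have hex := expS_sub_expS_smodEq hF hx hx' hdx
  have hey := expS_sub_expS_smodEq hF hy hy' hdy
  have hprod : expS K x * expS K y - expS K x' * expS K y' ≡
      (x - x') + (y - y') [SMOD F (n + 1)] :=
    (hF.mul_sub_mul_smodEq (expS_sub_one_mem hF hx') (expS_sub_one_mem hF hy)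
      (hF.mem_of_smodEq hex hdx) (hF.mem_of_smodEq hey hdy)).trans (hex.add hey)
  have hlog := logS_sub_logS_smodEq (K := K) hF
    (hF.mul_sub_one_mem (expS_sub_one_mem hF hx) (expS_sub_one_mem hF hy))
    (hF.mul_sub_one_mem (expS_sub_one_mem hF hx') (expS_sub_one_mem hF hy'))
    (hF.mem_of_smodEq hprod (add_mem hdx hdy))
  have hsplit : BCHs K x y - BCHs K x' y' = logS K (expS K x * expS K y)
      - logS K (expS K x' * expS K y') - ((x - x') + (y - y')) := by
    simp only [BCHs]
    abel
  rw [← sub_smodEq_zero, hsplit, sub_smodEq_zero]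
  exact hlog.trans hprod

end

theorem stmt0_general (F : ℕ → Submodule K A) (hF : IsCompleteFiltration K F)
    (P : A →ₗ[K] A) (hP : ∀ n, ∀ x ∈ F n, P x ∈ F n)
    (a b ε : A) (hb : b ∈ F 1) (n : ℕ) (hn : 1 ≤ n) (hε : ε ∈ F n) :
    (a - BCHs K (P (b + ε)) ((b + ε) - P (b + ε))) - (a - BCHs K (P b) (b - P b)) ∈ F (n + 1) := by
  have hbε : b + ε ∈ F 1 := add_mem hb (hF.antitone hn hε)
  have hdP : P (b + ε) - P b ∈ F n := by
    rw [← map_sub, add_sub_cancel_left]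
    exact hP n ε hε
  have hdQ : (b + ε - P (b + ε)) - (b - P b) ∈ F n := by
    rw [sub_sub_sub_comm, add_sub_cancel_left]
    exact sub_mem hε hdP
  have hBCH := BCHs_smodEq hF (hP 1 _ hbε) (sub_mem hbε (hP 1 _ hbε)) (hP 1 b hb)
    (sub_mem hb (hP 1 b hb)) hdP hdQ
  rw [sub_sub_sub_cancel_left]
  exact SModEq.sub_mem.1 hBCH.symm

theorem stmt0 (F : ℕ → Submodule K A) (hF : IsCompleteFiltration K F)
    (P : A →ₗ[K] A) (hP : ∀ n, ∀ x ∈ F n, P x ∈ F n)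
    (a b ε : A) (ha : a ∈ F 1) (hb : b ∈ F 1) (n : ℕ) (hn : 1 ≤ n) (hε : ε ∈ F n) :
    (a - BCHs K (P (b + ε)) ((b + ε) - P (b + ε))) - (a - BCHs K (P b) (b - P b)) ∈ F (n + 1) :=
  stmt0_general F hF P hP a b ε hb n hn hε
end

section
/- The map ψ: A_1 → A_1 defined by ψ(a) = C(P(a), P̃(a)) preserves the ultrametric distance given by the filtration: if x − y ∈ A_n but x − y ∉ A_{n+1}, then ψ(x) − ψ(y) ∉ A_{n+1}. Consequently ψ is injective. -/
open scoped BigOperators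

variable {K : Type*} [Field K] [CharZero K] {A : Type*} [Ring A] [Algebra K A]
  [UniformSpace A] [CompleteSpace A] [T2Space A] [IsTopologicalRing A]
  [IsUniformAddGroup A]

set_option linter.unusedSectionVars false

namespace StmtAux

variable (F : ℕ → Submodule K A)

section

variable (hF : IsCompleteFiltration K F)
include hF

lemma Fmono : Antitone F := antitone_nat_of_succ_le hF.2.1

lemma isClosedF (n : ℕ) : IsClosed ((F n : Set A)) :=
  AddSubgroup.isClosed_of_isOpen (F n).toAddSubgroup (hF.2.2.2.1 n)

lemma summableF (f : ℕ → A) (hf : ∀ k, f k ∈ F k) : Summable f := by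
  rw [summable_iff_vanishing]
  intro e he
  obtain ⟨n, hn⟩ := hF.2.2.2.2 e he
  refine ⟨Finset.range n, fun t ht => hn ?_⟩
  refine Submodule.sum_mem _ fun i hi => Fmono F hF ?_ (hf i)
  by_contra h
  exact Finset.disjoint_left.mp ht hi (Finset.mem_range.mpr (lt_of_not_ge h))

lemma tsum_memF (f : ℕ → A) (hs : Summable f) (m : ℕ) (hf : ∀ k, f k ∈ F m) :
    (∑' k, f k) ∈ F m := by
  have h1 : Filter.Tendsto (fun n => ∑ i ∈ Finset.range n, f i) Filter.atTop
      (nhds (∑' k, f k)) := hs.hasSum.tendsto_sum_nat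
  exact (isClosedF F hF m).mem_of_tendsto h1
    (Filter.Eventually.of_forall fun n => Submodule.sum_mem _ fun i _ => hf i)

lemma pow_memF {a : A} (ha : a ∈ F 1) : ∀ k, a ^ k ∈ F k := by
  intro k
  induction k with
  | zero => simp [hF.1]
  | succ k ih =>
    have := hF.2.2.1 k 1 _ ih _ ha
    rw [pow_succ]
    exact this

lemma pow_sub_memF {a b : A} (ha : a ∈ F 1) (hb : b ∈ F 1) {n : ℕ} (hab : a - b ∈ F n) :
    ∀ k, a ^ (k + 1) - b ^ (k + 1) ∈ F (n + k) := by
  intro k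
  induction k with
  | zero => simpa using hab
  | succ k ih =>
    have h1 : a ^ (k + 1) * (a - b) ∈ F ((k + 1) + n) :=
      hF.2.2.1 _ _ _ (pow_memF F hF ha (k + 1)) _ hab
    have h2 : (a ^ (k + 1) - b ^ (k + 1)) * b ∈ F ((n + k) + 1) :=
      hF.2.2.1 _ _ _ ih _ hb
    have heq : a ^ (k + 1 + 1) - b ^ (k + 1 + 1) =
        a ^ (k + 1) * (a - b) + (a ^ (k + 1) - b ^ (k + 1)) * b := by
      rw [pow_succ, pow_succ]
      noncomm_ring
    rw [heq]
    have h1' : a ^ (k + 1) * (a - b) ∈ F (n + (k + 1)) := by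
      rwa [add_comm (k + 1) n] at h1
    have h2' : (a ^ (k + 1) - b ^ (k + 1)) * b ∈ F (n + (k + 1)) := by
      rwa [add_assoc] at h2
    exact add_mem h1' h2'

/-! Exponential series facts. -/

lemma fE_mem {b : A} (hb : b ∈ F 1) (k : ℕ) : ((k.factorial : K)⁻¹) • b ^ k ∈ F k :=
  Submodule.smul_mem _ _ (pow_memF F hF hb k)

lemma summable_fE {b : A} (hb : b ∈ F 1) :
    Summable (fun k : ℕ => ((k.factorial : K)⁻¹) • b ^ k) :=
  summableF F hF _ (fE_mem F hF hb)

lemma exp_eq {b : A} (hb : b ∈ F 1) :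
    expS K b = 1 + b + ∑' k : ℕ, ((((k + 1) + 1).factorial : K)⁻¹) • b ^ ((k + 1) + 1) := by
  have h1 := Summable.tsum_eq_zero_add (summable_fE F hF hb)
  have h2 := Summable.tsum_eq_zero_add ((summable_nat_add_iff 1).mpr (summable_fE F hF hb))
  rw [expS, h1, h2]
  have e0 : (((0 : ℕ).factorial : K)⁻¹) • b ^ (0 : ℕ) = 1 := by
    simp
  have e1 : (((0 + 1 : ℕ).factorial : K)⁻¹) • b ^ (0 + 1 : ℕ) = b := by
    simp
  rw [e0, e1]
  abel

lemma summable_fE2 {b : A} (hb : b ∈ F 1) :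
    Summable (fun k : ℕ => ((((k + 1) + 1).factorial : K)⁻¹) • b ^ ((k + 1) + 1)) :=
  (summable_nat_add_iff 2).mpr (summable_fE F hF hb)

lemma W_mem {b : A} (hb : b ∈ F 1) :
    (∑' k : ℕ, ((((k + 1) + 1).factorial : K)⁻¹) • b ^ ((k + 1) + 1)) ∈ F 2 :=
  tsum_memF F hF _ (summable_fE2 F hF hb) 2 fun k =>
    Fmono F hF (by omega) (fE_mem F hF hb ((k + 1) + 1))

lemma W_sub_mem {a b : A} (ha : a ∈ F 1) (hb : b ∈ F 1) {n : ℕ} (hab : a - b ∈ F n) :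
    (∑' k : ℕ, ((((k + 1) + 1).factorial : K)⁻¹) • a ^ ((k + 1) + 1)) -
      (∑' k : ℕ, ((((k + 1) + 1).factorial : K)⁻¹) • b ^ ((k + 1) + 1)) ∈ F (n + 1) := by
  have hsa := summable_fE2 F hF ha
  have hsb := summable_fE2 F hF hb
  rw [← Summable.tsum_sub hsa hsb]
  refine tsum_memF F hF _ (hsa.sub hsb) _ fun k => ?_
  have heq : ((((k + 1) + 1).factorial : K)⁻¹) • a ^ ((k + 1) + 1) -
      ((((k + 1) + 1).factorial : K)⁻¹) • b ^ ((k + 1) + 1)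
      = ((((k + 1) + 1).factorial : K)⁻¹) • (a ^ ((k + 1) + 1) - b ^ ((k + 1) + 1)) := by
    rw [smul_sub]
  rw [heq]
  refine Submodule.smul_mem _ _ (Fmono F hF ?_ (pow_sub_memF F hF ha hb hab (k + 1)))
  omega

lemma v_mem {b : A} (hb : b ∈ F 1) : expS K b - 1 ∈ F 1 := by
  rw [exp_eq F hF hb]
  have heq : (1 : A) + b + (∑' k : ℕ, ((((k + 1) + 1).factorial : K)⁻¹) • b ^ ((k + 1) + 1)) - 1
      = b + (∑' k : ℕ, ((((k + 1) + 1).factorial : K)⁻¹) • b ^ ((k + 1) + 1)) := by abel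
  rw [heq]
  exact add_mem hb (Fmono F hF (by omega) (W_mem F hF hb))

lemma v_sub_mem {a b : A} (ha : a ∈ F 1) (hb : b ∈ F 1) {n : ℕ} (hab : a - b ∈ F n) :
    (expS K a - 1) - (expS K b - 1) - (a - b) ∈ F (n + 1) := by
  rw [exp_eq F hF ha, exp_eq F hF hb]
  have heq : (1 + a + (∑' k : ℕ, ((((k + 1) + 1).factorial : K)⁻¹) • a ^ ((k + 1) + 1)) - 1) -
      (1 + b + (∑' k : ℕ, ((((k + 1) + 1).factorial : K)⁻¹) • b ^ ((k + 1) + 1)) - 1) - (a - b)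
      = (∑' k : ℕ, ((((k + 1) + 1).factorial : K)⁻¹) • a ^ ((k + 1) + 1)) -
        (∑' k : ℕ, ((((k + 1) + 1).factorial : K)⁻¹) • b ^ ((k + 1) + 1)) := by abel
  rw [heq]
  exact W_sub_mem F hF ha hb hab

/-! The element `u = exp p * exp q - 1`. -/

lemma u_eq (p q : A) :
    expS K p * expS K q - 1 =
      (expS K p - 1) + (expS K q - 1) + (expS K p - 1) * (expS K q - 1) := by
  noncomm_ring

lemma u_mem {p q : A} (hp : p ∈ F 1) (hq : q ∈ F 1) : expS K p * expS K q - 1 ∈ F 1 := by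
  rw [u_eq F hF]
  refine add_mem (add_mem (v_mem F hF hp) (v_mem F hF hq)) ?_
  exact Fmono F hF (by omega) (hF.2.2.1 1 1 _ (v_mem F hF hp) _ (v_mem F hF hq))

lemma u_sub_mem {p q p' q' : A} (hp : p ∈ F 1) (hq : q ∈ F 1) (hp' : p' ∈ F 1)
    (hq' : q' ∈ F 1) {n : ℕ} (hpp : p - p' ∈ F n) (hqq : q - q' ∈ F n) :
    (expS K p * expS K q - 1) - (expS K p' * expS K q' - 1) - ((p - p') + (q - q')) ∈
      F (n + 1) := by
  have hvpm : expS K p - 1 ∈ F 1 := v_mem F hF hp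
  have hvqm : expS K q - 1 ∈ F 1 := v_mem F hF hq
  have hvp'm : expS K p' - 1 ∈ F 1 := v_mem F hF hp'
  have hvq'm : expS K q' - 1 ∈ F 1 := v_mem F hF hq'
  have hdp : (expS K p - 1) - (expS K p' - 1) - (p - p') ∈ F (n + 1) :=
    v_sub_mem F hF hp hp' hpp
  have hdq : (expS K q - 1) - (expS K q' - 1) - (q - q') ∈ F (n + 1) :=
    v_sub_mem F hF hq hq' hqq
  have hdpn : (expS K p - 1) - (expS K p' - 1) ∈ F n := by
    have heq : (expS K p - 1) - (expS K p' - 1)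
        = ((expS K p - 1) - (expS K p' - 1) - (p - p')) + (p - p') := by abel
    rw [heq]
    exact add_mem (Fmono F hF (by omega) hdp) hpp
  have hdqn : (expS K q - 1) - (expS K q' - 1) ∈ F n := by
    have heq : (expS K q - 1) - (expS K q' - 1)
        = ((expS K q - 1) - (expS K q' - 1) - (q - q')) + (q - q') := by abel
    rw [heq]
    exact add_mem (Fmono F hF (by omega) hdq) hqq
  have hcross : (expS K p - 1) * (expS K q - 1) - (expS K p' - 1) * (expS K q' - 1) ∈
      F (n + 1) := by
    have heq : (expS K p - 1) * (expS K q - 1) - (expS K p' - 1) * (expS K q' - 1)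
        = ((expS K p - 1) - (expS K p' - 1)) * (expS K q - 1) +
          (expS K p' - 1) * ((expS K q - 1) - (expS K q' - 1)) := by noncomm_ring
    rw [heq]
    refine add_mem (hF.2.2.1 n 1 _ hdpn _ hvqm) ?_
    have := hF.2.2.1 1 n _ hvp'm _ hdqn
    rwa [add_comm 1 n] at this
  rw [u_eq F hF p q, u_eq F hF p' q']
  have heq : ((expS K p - 1) + (expS K q - 1) + (expS K p - 1) * (expS K q - 1)) -
      ((expS K p' - 1) + (expS K q' - 1) + (expS K p' - 1) * (expS K q' - 1)) -
      ((p - p') + (q - q'))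
      = (((expS K p - 1) - (expS K p' - 1) - (p - p')) +
        ((expS K q - 1) - (expS K q' - 1) - (q - q'))) +
        ((expS K p - 1) * (expS K q - 1) - (expS K p' - 1) * (expS K q' - 1)) := by abel
  rw [heq]
  exact add_mem (add_mem hdp hdq) hcross

/-! Logarithm series facts. -/

lemma fL_mem {u : A} (hu : u ∈ F 1) (k : ℕ) :
    (((-1 : K) ^ k) * ((k : K) + 1)⁻¹) • u ^ (k + 1) ∈ F (k + 1) :=
  Submodule.smul_mem _ _ (pow_memF F hF hu (k + 1))

lemma summable_fL {u : A} (hu : u ∈ F 1) :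
    Summable (fun k : ℕ => (((-1 : K) ^ k) * ((k : K) + 1)⁻¹) • u ^ (k + 1)) :=
  summableF F hF _ fun k => Fmono F hF (by omega) (fL_mem F hF hu k)

lemma log_sub_mem {u u' : A} (hu : u ∈ F 1) (hu' : u' ∈ F 1) {n : ℕ} (huu : u - u' ∈ F n) :
    (∑' k : ℕ, (((-1 : K) ^ k) * ((k : K) + 1)⁻¹) • u ^ (k + 1)) -
      (∑' k : ℕ, (((-1 : K) ^ k) * ((k : K) + 1)⁻¹) • u' ^ (k + 1)) - (u - u') ∈ F (n + 1) := by
  have hs := summable_fL F hF hu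
  have hs' := summable_fL F hF hu'
  have hd : Summable (fun k : ℕ => (((-1 : K) ^ k) * ((k : K) + 1)⁻¹) • u ^ (k + 1) -
      (((-1 : K) ^ k) * ((k : K) + 1)⁻¹) • u' ^ (k + 1)) := hs.sub hs'
  rw [← Summable.tsum_sub hs hs', Summable.tsum_eq_zero_add hd]
  simp only [pow_zero, Nat.cast_zero, zero_add, pow_one, inv_one, one_mul, one_smul]
  have heq : u - u' + (∑' k : ℕ, ((((-1 : K) ^ (k + 1)) * (((k + 1 : ℕ) : K) + 1)⁻¹) •
        u ^ (k + 1 + 1) - (((-1 : K) ^ (k + 1)) * (((k + 1 : ℕ) : K) + 1)⁻¹) •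
        u' ^ (k + 1 + 1))) - (u - u')
      = ∑' k : ℕ, ((((-1 : K) ^ (k + 1)) * (((k + 1 : ℕ) : K) + 1)⁻¹) • u ^ (k + 1 + 1) -
          (((-1 : K) ^ (k + 1)) * (((k + 1 : ℕ) : K) + 1)⁻¹) • u' ^ (k + 1 + 1)) := by abel
  rw [heq]
  refine tsum_memF F hF _ ((summable_nat_add_iff 1).mpr hd) _ fun k => ?_
  have hsm : (((-1 : K) ^ (k + 1)) * (((k + 1 : ℕ) : K) + 1)⁻¹) • u ^ (k + 1 + 1) -
      (((-1 : K) ^ (k + 1)) * (((k + 1 : ℕ) : K) + 1)⁻¹) • u' ^ (k + 1 + 1)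
      = (((-1 : K) ^ (k + 1)) * (((k + 1 : ℕ) : K) + 1)⁻¹) •
        (u ^ (k + 1 + 1) - u' ^ (k + 1 + 1)) := by rw [smul_sub]
  rw [hsm]
  refine Submodule.smul_mem _ _ (Fmono F hF ?_ (pow_sub_memF F hF hu hu' huu (k + 1)))
  omega

/-! The key lemma. -/

lemma psi_sub_mem (P : A →ₗ[K] A) (hP : ∀ n, ∀ x ∈ F n, P x ∈ F n)
    {x y : A} (hx : x ∈ F 1) (hy : y ∈ F 1) {n : ℕ} (hxy : x - y ∈ F n) :
    logS K (expS K (P x) * expS K (x - P x)) -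
      logS K (expS K (P y) * expS K (y - P y)) - (x - y) ∈ F (n + 1) := by
  have hpx : P x ∈ F 1 := hP 1 x hx
  have hqx : x - P x ∈ F 1 := sub_mem hx hpx
  have hpy : P y ∈ F 1 := hP 1 y hy
  have hqy : y - P y ∈ F 1 := sub_mem hy hpy
  have hpp : P x - P y ∈ F n := by
    have := hP n _ hxy
    rwa [map_sub] at this
  have hqq : (x - P x) - (y - P y) ∈ F n := by
    have heq : (x - P x) - (y - P y) = (x - y) - (P x - P y) := by abel
    rw [heq]
    exact sub_mem hxy hpp
  have husub : (expS K (P x) * expS K (x - P x) - 1) -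
      (expS K (P y) * expS K (y - P y) - 1) - (x - y) ∈ F (n + 1) := by
    have h := u_sub_mem F hF hpx hqx hpy hqy hpp hqq
    have heq : (P x - P y) + ((x - P x) - (y - P y)) = x - y := by abel
    rwa [heq] at h
  have hux : expS K (P x) * expS K (x - P x) - 1 ∈ F 1 := u_mem F hF hpx hqx
  have huy : expS K (P y) * expS K (y - P y) - 1 ∈ F 1 := u_mem F hF hpy hqy
  have huxy : (expS K (P x) * expS K (x - P x) - 1) -
      (expS K (P y) * expS K (y - P y) - 1) ∈ F n := by
    have heq : (expS K (P x) * expS K (x - P x) - 1) -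
        (expS K (P y) * expS K (y - P y) - 1)
        = ((expS K (P x) * expS K (x - P x) - 1) -
          (expS K (P y) * expS K (y - P y) - 1) - (x - y)) + (x - y) := by abel
    rw [heq]
    exact add_mem (Fmono F hF (by omega) husub) hxy
  have hlog := log_sub_mem F hF hux huy huxy
  have hgoal : logS K (expS K (P x) * expS K (x - P x)) -
      logS K (expS K (P y) * expS K (y - P y)) - (x - y)
      = ((∑' k : ℕ, (((-1 : K) ^ k) * ((k : K) + 1)⁻¹) •
          (expS K (P x) * expS K (x - P x) - 1) ^ (k + 1)) -
        (∑' k : ℕ, (((-1 : K) ^ k) * ((k : K) + 1)⁻¹) •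
          (expS K (P y) * expS K (y - P y) - 1) ^ (k + 1)) -
        ((expS K (P x) * expS K (x - P x) - 1) - (expS K (P y) * expS K (y - P y) - 1))) +
        ((expS K (P x) * expS K (x - P x) - 1) -
          (expS K (P y) * expS K (y - P y) - 1) - (x - y)) := by
    simp only [logS]
    abel
  rw [hgoal]
  exact add_mem hlog husub

end

end StmtAux

theorem stmt2 (F : ℕ → Submodule K A) (hF : IsCompleteFiltration K F)
    (P : A →ₗ[K] A) (hP : ∀ n, ∀ x ∈ F n, P x ∈ F n) :
    (∀ x ∈ F 1, ∀ y ∈ F 1, ∀ n : ℕ, x - y ∈ F n → x - y ∉ F (n + 1) →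
      (logS K (expS K (P x) * expS K (x - P x)) -
        logS K (expS K (P y) * expS K (y - P y))) ∉ F (n + 1)) ∧
    (∀ x ∈ F 1, ∀ y ∈ F 1,
      logS K (expS K (P x) * expS K (x - P x)) = logS K (expS K (P y) * expS K (y - P y)) →
      x = y) := by
  classical
  constructor
  · intro x hx y hy n hxy hnot hmem
    apply hnot
    have hk := StmtAux.psi_sub_mem F hF P hP hx hy hxy
    have heq : x - y = (logS K (expS K (P x) * expS K (x - P x)) -
        logS K (expS K (P y) * expS K (y - P y))) -
        (logS K (expS K (P x) * expS K (x - P x)) -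
          logS K (expS K (P y) * expS K (y - P y)) - (x - y)) := by abel
    rw [heq]
    exact sub_mem hmem hk
  · intro x hx y hy heq
    by_contra hne
    have hz : x - y ≠ 0 := sub_ne_zero.mpr hne
    have hex : ∃ m, x - y ∉ F m := by
      have hU : ({x - y}ᶜ : Set A) ∈ nhds 0 := by
        refine IsOpen.mem_nhds isOpen_compl_singleton ?_
        simpa using fun h => hz h.symm
      obtain ⟨m, hm⟩ := hF.2.2.2.2 _ hU
      exact ⟨m, fun h => (hm h) rfl⟩
    have hm0 : x - y ∉ F (Nat.find hex) := Nat.find_spec hex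
    have hlt : ∀ k < Nat.find hex, x - y ∈ F k := fun k hk =>
      not_not.mp (Nat.find_min hex hk)
    have h2le : 2 ≤ Nat.find hex := by
      by_contra h
      interval_cases h' : Nat.find hex
      · exact hm0 (by rw [hF.1]; trivial)
      · exact hm0 (sub_mem hx hy)
    have h1 : x - y ∈ F (Nat.find hex - 1) := hlt _ (by omega)
    have h2 : x - y ∉ F ((Nat.find hex - 1) + 1) := by
      have : (Nat.find hex - 1) + 1 = Nat.find hex := by omega
      rw [this]
      exact hm0
    have hk := StmtAux.psi_sub_mem F hF P hP hx hy h1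
    have hzero : logS K (expS K (P x) * expS K (x - P x)) -
        logS K (expS K (P y) * expS K (y - P y)) = 0 := sub_eq_zero.mpr heq
    rw [hzero, zero_sub] at hk
    exact h2 ((neg_mem_iff).mp hk)
end

section
/- (Atkinson factorization) Let (A,P) be a complete filtered Rota–Baxter algebra of weight 1 and b ∈ A_1. If x and x' are the unique solutions in 1+A_1 of x = 1 − P(xb) and x' = 1 − P̃(bx') (P̃ = id − P), then x(1+b)x' = 1; equivalently 1 + b = x^{-1}(x')^{-1}. If P is idempotent, this factorization of 1+b into a factor in 1 + P(A_1) times a factor in 1 + P̃(A_1) is unique. -/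
open scoped BigOperators

variable {K : Type*} [Field K] [CharZero K] {A : Type*} [Ring A] [Algebra K A]
  [UniformSpace A] [CompleteSpace A] [T2Space A] [IsTopologicalRing A]
  [IsUniformAddGroup A]

/-!
Atkinson: from `x = 1 - P(xb)` and `(1 + b)x' = 1 + P(bx')`, the Rota–Baxter identity applied to
`xb` and `bx'` gives `x P(bx') = P(xb)`, hence `x(1 + b)x' = x + P(xb) = 1`.

Uniqueness: if `(1 + p)(1 + q) = (1 + p')(1 + q')` with `p, p'` in the image and `q, q'` in the
kernel of the idempotent `P`, then `d = p - p'` and `e = q - q'` satisfy `d + e = -(pe + dq')`;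
applying `P` gives `d = -P(pe + dq')`. So if `d, e ∈ A_n` then `d, e ∈ A_{n+1}`, and a separated
filtration forces `d = e = 0`.
-/

theorem eq_zero_of_forall_mem_of_nhds_basis {A : Type*} [Zero A] [TopologicalSpace A]
    [T1Space A] {S : ℕ → Set A} (hS : ∀ U ∈ nhds (0 : A), ∃ n, S n ⊆ U) {z : A}
    (hz : ∀ n, z ∈ S n) : z = 0 := by
  by_contra hne
  obtain ⟨n, hn⟩ := hS {z}ᶜ (isOpen_compl_singleton.mem_nhds (Ne.symm hne))
  exact hn (hz n) rfl

section RotaBaxter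

variable {A : Type*} [Ring A] (P : A →+ A)

theorem atkinson_factorization
    (hRB : ∀ a c : A, P a * P c + P (a * c) = P (a * P c) + P (P a * c))
    {b x x' : A} (hx : x = 1 - P (x * b)) (hx' : x' = 1 - (b * x' - P (b * x'))) :
    x * (1 + b) * x' = 1 := by
  have hPx : P (x * b) = 1 - x := by nth_rewrite 2 [hx]; abel
  have hPx' : P (b * x') = x' - 1 + b * x' := by nth_rewrite 2 [hx']; abel
  have hRBleft : x * b * P (b * x') = x * (b * x') - x * b + x * b * (b * x') := by
    rw [hPx']; noncomm_ring
  have hRBright : P (x * b) * (b * x') = b * x' - x * (b * x') := by rw [hPx]; noncomm_ring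
  have hPP : P (x * b) * P (b * x') = P (b * x') - P (x * b) := by
    have h := hRB (x * b) (b * x')
    rw [hRBleft, hRBright, map_add, map_sub, map_sub] at h
    linear_combination (norm := abel) h
  have hxP : x * P (b * x') = P (x * b) := by
    nth_rewrite 1 [hx]
    rw [sub_mul, one_mul, hPP]; abel
  calc x * (1 + b) * x' = x + x * P (b * x') := by rw [hPx']; noncomm_ring
    _ = 1 := by rw [hxP, hPx]; abel

end RotaBaxter

section Filtration

variable {A : Type*} [Ring A] (P : A →+ A) (F : ℕ → AddSubgroup A)

theorem sub_mem_of_one_add_mul_one_add_eq (hF0 : F 0 = ⊤)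
    (hFmul : ∀ m n : ℕ, ∀ a ∈ F m, ∀ c ∈ F n, a * c ∈ F (m + n))
    (hP : ∀ n, ∀ a ∈ F n, P a ∈ F n) {p q p' q' : A} (hp1 : p ∈ F 1) (hq'1 : q' ∈ F 1)
    (hp : P p = p) (hp' : P p' = p') (hq : P q = 0) (hq' : P q' = 0)
    (h : (1 + p) * (1 + q) = (1 + p') * (1 + q')) :
    ∀ n, p - p' ∈ F n ∧ q - q' ∈ F n := by
  have hsum : (p - p') + (q - q') + (p * (q - q') + (p - p') * q') = 0 := by
    linear_combination (norm := noncomm_ring) h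
  have hd : p - p' = -P (p * (q - q') + (p - p') * q') := by
    have := congrArg P hsum
    rw [map_add, map_add, map_sub, map_sub, hp, hp', hq, hq', map_zero] at this
    linear_combination (norm := abel) this
  intro n
  induction n with
  | zero => simp [hF0]
  | succ n ih =>
    have hcorr : p * (q - q') + (p - p') * q' ∈ F (n + 1) :=
      add_mem (add_comm 1 n ▸ hFmul 1 n p hp1 _ ih.2) (hFmul n 1 _ ih.1 q' hq'1)
    have hd' : p - p' ∈ F (n + 1) := hd ▸ neg_mem (hP _ _ hcorr)
    refine ⟨hd', ?_⟩
    have he : q - q' = -(p - p') - (p * (q - q') + (p - p') * q') := by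
      linear_combination (norm := abel) hsum
    exact he ▸ sub_mem (neg_mem hd') hcorr

end Filtration

theorem stmt17_general (F : ℕ → Submodule K A) (hF : IsCompleteFiltration K F)
    (P : A →ₗ[K] A) (hP : ∀ n, ∀ x ∈ F n, P x ∈ F n)
    (hRB : ∀ x y : A, P x * P y + P (x * y) = P (x * P y) + P (P x * y))
    (b : A) (x x' : A)
    (hx : x = 1 - P (x * b)) (hx' : x' = 1 - (b * x' - P (b * x'))) :
    x * (1 + b) * x' = 1 ∧
    ((∀ w : A, P (P w) = P w) →
      ∀ u v u' v' : A,
        (∃ w ∈ F 1, u = 1 + P w) → (∃ w ∈ F 1, v = 1 + (w - P w)) →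
        (∃ w ∈ F 1, u' = 1 + P w) → (∃ w ∈ F 1, v' = 1 + (w - P w)) →
        u * v = 1 + b → u' * v' = 1 + b → u = u' ∧ v = v') := by
  obtain ⟨hF0, -, hFmul, -, hFnhds⟩ := hF
  refine ⟨atkinson_factorization P.toAddMonoidHom hRB hx hx', ?_⟩
  rintro hid u v u' v' ⟨w₁, hw₁, rfl⟩ ⟨w₂, -, rfl⟩ ⟨w₃, -, rfl⟩ ⟨w₄, hw₄, rfl⟩ huv hu'v'
  have hker : ∀ w, P (w - P w) = 0 := fun w => by rw [map_sub, hid, sub_self]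
  have hmem := sub_mem_of_one_add_mul_one_add_eq P.toAddMonoidHom (fun n => (F n).toAddSubgroup)
    (by rw [hF0, Submodule.top_toAddSubgroup]) hFmul hP (hP 1 w₁ hw₁)
    (sub_mem hw₄ (hP 1 w₄ hw₄)) (hid w₁) (hid w₃) (hker w₂) (hker w₄) (huv.trans hu'v'.symm)
  have hsep : ∀ z : A, (∀ n, z ∈ F n) → z = 0 := fun z =>
    eq_zero_of_forall_mem_of_nhds_basis hFnhds
  exact ⟨congrArg (1 + ·) (sub_eq_zero.mp (hsep _ fun n => (hmem n).1)),
    congrArg (1 + ·) (sub_eq_zero.mp (hsep _ fun n => (hmem n).2))⟩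

theorem stmt17 (F : ℕ → Submodule K A) (hF : IsCompleteFiltration K F)
    (P : A →ₗ[K] A) (hP : ∀ n, ∀ x ∈ F n, P x ∈ F n)
    (hRB : ∀ x y : A, P x * P y + P (x * y) = P (x * P y) + P (P x * y))
    (b : A) (hb : b ∈ F 1) (x x' : A)
    (hx : x = 1 - P (x * b)) (hx' : x' = 1 - (b * x' - P (b * x'))) :
    x * (1 + b) * x' = 1 ∧
    ((∀ w : A, P (P w) = P w) →
      ∀ u v u' v' : A,
        (∃ w ∈ F 1, u = 1 + P w) → (∃ w ∈ F 1, v = 1 + (w - P w)) →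
        (∃ w ∈ F 1, u' = 1 + P w) → (∃ w ∈ F 1, v' = 1 + (w - P w)) →
        u * v = 1 + b → u' * v' = 1 + b → u = u' ∧ v = v') :=
  stmt17_general F hF P hP hRB b x x' hx hx'
end
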